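/- For all p⁺, p⁻ ∈ ℝ, the operators ρ(J⁺), ρ(J⁻), ρ(J), ρ(T) on V₊^{p⁺,p⁻} satisfy [ρ(J⁺), ρ(J⁻)] = 2i ρ(T), [ρ(J), ρ(J⁺)] = i ρ(J⁺), [ρ(J), ρ(J⁻)] = −i ρ(J⁻), and ρ(T) commutes with all of them; hence they define a representation of the Nappi–Witten Lie algebra 𝔫𝔴 on V₊^{p⁺,p⁻}. -/
import Mathlib


/-!
For `p⁺, p⁻ ∈ ℝ`, `V₊^{p⁺,p⁻}` is the complex vector space with basis
`{|r⟩ : r ∈ ℕ}` (modelled as `ℕ →₀ ℂ`, `|r⟩ = single r 1`) with operators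
`ρ(T)|r⟩ = ip⁺|r⟩`, `ρ(J)|r⟩ = i(p⁻ − r)|r⟩`, `ρ(J⁻)|r⟩ = i|r+1⟩`,
`ρ(J⁺)|r⟩ = 2ip⁺r|r−1⟩` (so `ρ(J⁺)|0⟩ = 0`).
-/

/-- The basis vector `|r⟩` of `V₊^{p⁺,p⁻}`. -/
noncomputable def ket (r : ℕ) : ℕ →₀ ℂ := Finsupp.single r 1

/-- Linear extension of a map defined on the basis `{|r⟩}`. -/
noncomputable def opOf (g : ℕ → (ℕ →₀ ℂ)) : (ℕ →₀ ℂ) →ₗ[ℂ] (ℕ →₀ ℂ) :=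
  Finsupp.lsum ℂ fun r => LinearMap.toSpanSingleton ℂ (ℕ →₀ ℂ) (g r)

/-- `ρ(T)`. -/
noncomputable def rhoT (pp : ℝ) : (ℕ →₀ ℂ) →ₗ[ℂ] (ℕ →₀ ℂ) :=
  opOf fun r => (Complex.I * (pp : ℂ)) • ket r

/-- `ρ(J)`. -/
noncomputable def rhoJ (pm : ℝ) : (ℕ →₀ ℂ) →ₗ[ℂ] (ℕ →₀ ℂ) :=
  opOf fun r => (Complex.I * ((pm : ℂ) - (r : ℂ))) • ket r

/-- `ρ(J⁻)`. -/
noncomputable def rhoJminus : (ℕ →₀ ℂ) →ₗ[ℂ] (ℕ →₀ ℂ) :=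
  opOf fun r => Complex.I • ket (r + 1)

/-- `ρ(J⁺)`. -/
noncomputable def rhoJplus (pp : ℝ) : (ℕ →₀ ℂ) →ₗ[ℂ] (ℕ →₀ ℂ) :=
  opOf fun r => (2 * Complex.I * (pp : ℂ) * (r : ℂ)) • ket (r - 1)

lemma opOf_ket (g : ℕ → (ℕ →₀ ℂ)) (r : ℕ) : opOf g (ket r) = g r := by
  simp [opOf, ket]

lemma op_ext {f g : (ℕ →₀ ℂ) →ₗ[ℂ] (ℕ →₀ ℂ)} (h : ∀ r, f (ket r) = g (ket r)) :
    f = g := by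
  refine Finsupp.lhom_ext fun a b => ?_
  have : (Finsupp.single a b : ℕ →₀ ℂ) = b • ket a := by
    simp [ket, Finsupp.smul_single]
  rw [this, map_smul, map_smul, h]

/-- The operators `ρ(J⁺), ρ(J⁻), ρ(J), ρ(T)` on `V₊^{p⁺,p⁻}` satisfy
`[ρ(J⁺), ρ(J⁻)] = 2i ρ(T)`, `[ρ(J), ρ(J⁺)] = i ρ(J⁺)`, `[ρ(J), ρ(J⁻)] = −i ρ(J⁻)`,
and `ρ(T)` commutes with all of them; hence they define a representation of the
Nappi–Witten Lie algebra 𝔫𝔴 on `V₊^{p⁺,p⁻}`. -/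
theorem Vplus_is_nw_representation (pp pm : ℝ) :
    (rhoJplus pp ∘ₗ rhoJminus - rhoJminus ∘ₗ rhoJplus pp = (2 * Complex.I) • rhoT pp) ∧
    (rhoJ pm ∘ₗ rhoJplus pp - rhoJplus pp ∘ₗ rhoJ pm = Complex.I • rhoJplus pp) ∧
    (rhoJ pm ∘ₗ rhoJminus - rhoJminus ∘ₗ rhoJ pm = (-Complex.I) • rhoJminus) ∧
    (rhoT pp ∘ₗ rhoJplus pp = rhoJplus pp ∘ₗ rhoT pp) ∧
    (rhoT pp ∘ₗ rhoJminus = rhoJminus ∘ₗ rhoT pp) ∧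
    (rhoT pp ∘ₗ rhoJ pm = rhoJ pm ∘ₗ rhoT pp) := by
  refine ⟨?_, ?_, ?_, ?_, ?_, ?_⟩ <;> apply op_ext <;> intro r
  · rcases r with _ | s <;>
      simp [rhoJplus, rhoJminus, rhoT, opOf_ket, map_smul, smul_smul] <;>
      push_cast <;> match_scalars <;> ring_nf <;> simp only [Complex.I_sq] <;> ring
  · rcases r with _ | s <;>
      simp [rhoJplus, rhoJ, opOf_ket, map_smul, smul_smul] <;>
      push_cast <;> match_scalars <;> ring_nf <;> simp only [Complex.I_sq] <;> ring
  · simp [rhoJminus, rhoJ, opOf_ket, map_smul, smul_smul] <;> push_cast <;> match_scalars <;> ring_nf <;> simp only [Complex.I_sq] <;> ring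
  · simp [rhoJplus, rhoT, opOf_ket, map_smul, smul_smul, mul_comm]
  · simp [rhoJminus, rhoT, opOf_ket, map_smul, smul_smul, mul_comm]
  · simp [rhoJ, rhoT, opOf_ket, map_smul, smul_smul, mul_comm]
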